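/- Let α > 1 and μ > −1, and let Ψ(z) = z + 2∑_{n≥2} z^n/n. Then the function Ω^{α,μ}Ψ(z) = z + 2∑_{n≥2} [Γ(1/(μ+1)+α+1)·Γ(n/(μ+1)+1)] / [n·Γ(n/(μ+1)+α+1)·Γ(1/(μ+1)+1)] · z^n defines a bounded analytic function on the open unit disk. -/

import Mathlib

open Complex Metric

/-!
With x = n/(μ+1), monotonicity of Γ on [2, ∞) and α ≥ 1 give
Γ(x+α+1) ≥ Γ(x+2) = (x+1)Γ(x+1), so the coefficient θ(n) (`omegaPsiCoeff`) is at most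
Γ(1/(μ+1)+α+1)(μ+1) / (Γ(1/(μ+1)+1) n²). The coefficients are therefore summable, and a power
series with summable coefficients converges uniformly on the closed unit disk: it is holomorphic
on the open disk and bounded there by 1 + 2∑θ(n).
-/

section PowerSeries

variable {f : ℕ → ℂ} (e : ℕ → ℕ)

lemma norm_mul_pow_le_norm {z : ℂ} (hz : ‖z‖ ≤ 1) (a : ℂ) (k : ℕ) : ‖a * z ^ k‖ ≤ ‖a‖ := by
  rw [norm_mul, norm_pow]
  exact mul_le_of_le_one_right (norm_nonneg a) (pow_le_one₀ (norm_nonneg z) hz)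

lemma differentiableOn_tsum_mul_pow (hf : Summable (‖f ·‖)) :
    DifferentiableOn ℂ (fun z => ∑' n, f n * z ^ e n) (ball 0 1) :=
  differentiableOn_tsum_of_summable_norm hf
    (fun _ => ((differentiable_const _).mul (differentiable_pow _)).differentiableOn) isOpen_ball
    (fun _ _ hz => norm_mul_pow_le_norm (mem_ball_zero_iff.mp hz).le _ _)

lemma norm_tsum_mul_pow_le (hf : Summable (‖f ·‖)) {z : ℂ} (hz : ‖z‖ ≤ 1) :
    ‖∑' n, f n * z ^ e n‖ ≤ ∑' n, ‖f n‖ :=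
  tsum_of_norm_bounded hf.hasSum fun _ => norm_mul_pow_le_norm hz _ _

end PowerSeries

lemma Real.mul_Gamma_le_Gamma_add {x α : ℝ} (hx : 0 ≤ x) (hα : 1 ≤ α) :
    (x + 1) * Gamma (x + 1) ≤ Gamma (x + α + 1) := by
  rw [← Gamma_add_one (by positivity)]
  exact Gamma_strictMonoOn_Ici.monotoneOn (by simp; linarith) (by simp; linarith) (by linarith)

noncomputable def omegaPsiCoeff (α μ : ℝ) (n : ℕ) : ℝ :=
  Real.Gamma (1 / (μ + 1) + α + 1) * Real.Gamma (n / (μ + 1) + 1) /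
    (n * Real.Gamma (n / (μ + 1) + α + 1) * Real.Gamma (1 / (μ + 1) + 1))

section omegaPsiCoeff

variable {α μ : ℝ}

lemma omegaPsiCoeff_nonneg (hα : 0 ≤ α) (hμ : -1 < μ) (n : ℕ) : 0 ≤ omegaPsiCoeff α μ n := by
  have : 0 < μ + 1 := by linarith
  unfold omegaPsiCoeff
  have := Real.Gamma_pos_of_pos (s := 1 / (μ + 1) + α + 1) (by positivity)
  have := Real.Gamma_pos_of_pos (s := 1 / (μ + 1) + 1) (by positivity)
  have := Real.Gamma_pos_of_pos (s := n / (μ + 1) + 1) (by positivity)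
  have := Real.Gamma_pos_of_pos (s := n / (μ + 1) + α + 1) (by positivity)
  positivity

lemma omegaPsiCoeff_le (hα : 1 ≤ α) (hμ : -1 < μ) (n : ℕ) :
    omegaPsiCoeff α μ n ≤
      Real.Gamma (1 / (μ + 1) + α + 1) / Real.Gamma (1 / (μ + 1) + 1) * (μ + 1) / n ^ 2 := by
  have hμ1 : 0 < μ + 1 := by linarith
  rcases n.eq_zero_or_pos with rfl | hn_pos
  · simp [omegaPsiCoeff]
  set x : ℝ := n / (μ + 1) with hx
  have hn : (0 : ℝ) < n := by exact_mod_cast hn_pos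
  have hA := Real.Gamma_pos_of_pos (s := 1 / (μ + 1) + α + 1) (by positivity)
  have hD := Real.Gamma_pos_of_pos (s := 1 / (μ + 1) + 1) (by positivity)
  have hG := Real.Gamma_pos_of_pos (s := x + 1) (by positivity)
  have hG' := Real.Gamma_pos_of_pos (s := x + α + 1) (by positivity)
  have hn_Gamma : n * Real.Gamma (x + 1) ≤ (μ + 1) * Real.Gamma (x + α + 1) :=
    calc n * Real.Gamma (x + 1) ≤ (μ + 1) * ((x + 1) * Real.Gamma (x + 1)) := by
          rw [hx]; field_simp; nlinarith
      _ ≤ (μ + 1) * Real.Gamma (x + α + 1) := by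
          gcongr; exact Real.mul_Gamma_le_Gamma_add (by positivity) hα
  unfold omegaPsiCoeff
  rw [div_le_div_iff₀ (by positivity) (by positivity), ← hx]
  field_simp
  nlinarith

lemma summable_omegaPsiCoeff (hα : 1 ≤ α) (hμ : -1 < μ) : Summable (omegaPsiCoeff α μ) :=
  .of_nonneg_of_le (omegaPsiCoeff_nonneg (by linarith) hμ) (omegaPsiCoeff_le hα hμ)
    ((Real.summable_nat_pow_inv.mpr one_lt_two).mul_left _)

end omegaPsiCoeff

theorem omega_psi_bounded (α μ : ℝ) (hα : 1 < α) (hμ : -1 < μ)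
    (g : ℂ → ℂ)
    (hg : ∀ z : ℂ, g z = z + 2 * ∑' n : ℕ,
      (((Real.Gamma (1 / (μ + 1) + α + 1) * Real.Gamma (((n + 2 : ℕ) : ℝ) / (μ + 1) + 1)) /
          (((n + 2 : ℕ) : ℝ) * Real.Gamma (((n + 2 : ℕ) : ℝ) / (μ + 1) + α + 1) *
            Real.Gamma (1 / (μ + 1) + 1)) : ℝ) : ℂ) * z ^ (n + 2)) :
    DifferentiableOn ℂ g (ball (0 : ℂ) 1) ∧
    ∃ M : ℝ, ∀ z ∈ ball (0 : ℂ) 1, ‖g z‖ ≤ M := by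
  set a : ℕ → ℂ := fun n => (omegaPsiCoeff α μ (n + 2) : ℂ)
  have ha : Summable (‖a ·‖) := by
    simpa [a, Complex.norm_real] using
      ((summable_nat_add_iff 2).mpr (summable_omegaPsiCoeff hα.le hμ)).abs
  obtain rfl : g = fun z => z + 2 * ∑' n, a n * z ^ (n + 2) := funext hg
  refine ⟨differentiableOn_id.add ((differentiableOn_tsum_mul_pow (· + 2) ha).const_mul 2),
    1 + 2 * ∑' n, ‖a n‖, fun z hz => ?_⟩
  have hz : ‖z‖ ≤ 1 := (mem_ball_zero_iff.mp hz).le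
  calc ‖z + 2 * ∑' n, a n * z ^ (n + 2)‖ ≤ ‖z‖ + 2 * ‖∑' n, a n * z ^ (n + 2)‖ := by
        simpa using norm_add_le z (2 * ∑' n, a n * z ^ (n + 2))
    _ ≤ 1 + 2 * ∑' n, ‖a n‖ := by
        gcongr
        exact norm_tsum_mul_pow_le (· + 2) ha hz
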